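/- Let U be a finite set, S a nonempty subset of U^T, and p_t* the maximum entropy feedback defined by cardinality ratios. Then the sum over t of the conditional entropies H(U_t | U_{<t}) under the joint distribution q(u) = ∏_t p_t*(u_t | u_{<t}) equals log |S|. -/

import Mathlib

/-!
For `u ∈ S` the prefix classes `pref S u t` form a chain of nonempty sets from `S` (at `t = 0`)
down to `{u}` (at `t = T`), so both the product of the `p_t*(u_t | u_{<t})` and the sum of their
negative logarithms telescope: `q(u) = 1 / |S|` and `∑ₜ -log p_t* = log |S|`. For `u ∉ S` the
last prefix class is empty, so `q(u) = 0`. Averaging `log |S|` over the uniform distribution on `S`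
gives the claim.
-/

open Finset

variable {T : ℕ}

def pref {U : Type*} [DecidableEq U] (S : Finset (Fin T → U)) (u : Fin T → U) (t : ℕ) :
    Finset (Fin T → U) :=
  S.filter (fun v => ∀ i : Fin T, (i : ℕ) < t → v i = u i)

noncomputable def mef {U : Type*} [DecidableEq U] (S : Finset (Fin T → U)) (u : Fin T → U)
    (t : ℕ) : ℝ :=
  ((pref S u (t + 1)).card : ℝ) / ((pref S u t).card : ℝ)

theorem Finset.prod_range_div_of_ne_zero {G : Type*} [CommGroupWithZero G] {f : ℕ → G}
    (hf : ∀ i, f i ≠ 0) (n : ℕ) : ∏ i ∈ range n, f (i + 1) / f i = f n / f 0 := by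
  induction n with
  | zero => simp [div_self (hf 0)]
  | succ n ih => rw [prod_range_succ, ih, div_mul_div_cancel₀' (hf n)]

section Prefix

variable {U : Type*} [DecidableEq U] {S : Finset (Fin T → U)} {u : Fin T → U}

theorem pref_zero (S : Finset (Fin T → U)) (u : Fin T → U) : pref S u 0 = S := by
  simp [pref]

theorem pref_length (S : Finset (Fin T → U)) (u : Fin T → U) : pref S u T = S ∩ {u} := by
  ext v
  simp only [pref, mem_filter, mem_inter, mem_singleton, funext_iff]
  exact and_congr_right fun _ => ⟨fun h i => h i i.isLt, fun h i _ => h i⟩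

theorem card_pref_ne_zero (hu : u ∈ S) (t : ℕ) : ((pref S u t).card : ℝ) ≠ 0 :=
  Nat.cast_ne_zero.mpr (card_ne_zero_of_mem (mem_filter.mpr ⟨hu, fun _ _ => rfl⟩))

theorem prod_mef_of_mem (hu : u ∈ S) : ∏ s : Fin T, mef S u s = (S.card : ℝ)⁻¹ := by
  rw [Fin.prod_univ_eq_prod_range (mef S u)]
  unfold mef
  rw [prod_range_div_of_ne_zero (card_pref_ne_zero hu), pref_length,
    inter_singleton_of_mem hu, pref_zero, card_singleton, Nat.cast_one, one_div]

theorem prod_mef_of_notMem (hT : 0 < T) (hu : u ∉ S) : ∏ s : Fin T, mef S u s = 0 := by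
  obtain ⟨n, rfl⟩ := Nat.exists_eq_add_one_of_ne_zero hT.ne'
  refine prod_eq_zero (mem_univ (Fin.last n)) ?_
  rw [mef, Fin.val_last, pref_length, inter_singleton_of_notMem hu, card_empty, Nat.cast_zero,
    zero_div]

theorem sum_neg_log_mef_of_mem (hu : u ∈ S) :
    ∑ t : Fin T, -Real.log (mef S u t) = Real.log S.card := by
  have hstep : ∀ t, -Real.log (mef S u t)
      = Real.log (pref S u t).card - Real.log (pref S u (t + 1)).card := fun t => by
    rw [mef, Real.log_div (card_pref_ne_zero hu _) (card_pref_ne_zero hu _), neg_sub]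
  rw [Fin.sum_univ_eq_sum_range (fun t => -Real.log (mef S u t)),
    sum_congr rfl fun t _ => hstep t, sum_range_sub', pref_zero, pref_length,
    inter_singleton_of_mem hu, card_singleton, Nat.cast_one, Real.log_one, sub_zero]

end Prefix

/-- `H(U_t | U_{<t})` is written as the expectation of `-log p_t*` under the full joint
distribution `q`; summing out `u_{>t}` recovers the form of the informal statement. -/
theorem mef_total_conditional_entropy_general (T : ℕ) (U : Type*) [Fintype U]
    [DecidableEq U] (S : Finset (Fin T → U)) :
    ∑ t : Fin T, ∑ u : Fin T → U,
      (∏ s : Fin T, mef S u (s : ℕ)) * (-Real.log (mef S u (t : ℕ)))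
      = Real.log (S.card : ℝ) := by
  -- restricted to `S` for each `t` separately, since `t : Fin T` supplies the `0 < T` that
  -- `prod_mef_of_notMem` needs
  have hsupp : ∀ t : Fin T, ∑ u, (∏ s : Fin T, mef S u s) * -Real.log (mef S u t)
      = ∑ u ∈ S, (∏ s : Fin T, mef S u s) * -Real.log (mef S u t) := fun t =>
    (sum_subset (subset_univ S) fun u _ hu => by rw [prod_mef_of_notMem t.pos hu, zero_mul]).symm
  rw [sum_congr rfl fun t _ => hsupp t, sum_comm]
  simp_rw [← mul_sum]
  rw [sum_congr rfl fun u hu => by rw [prod_mef_of_mem hu, sum_neg_log_mef_of_mem hu]]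
  obtain rfl | hS := S.eq_empty_or_nonempty
  · simp -- `Real.log 0 = 0`
  rw [sum_const, nsmul_eq_mul, mul_inv_cancel_left₀ (by exact_mod_cast hS.card_pos.ne')]

/-- The total conditional entropy of the maximum entropy feedback equals the system
capacity log |S|.  Each conditional entropy is written as the expectation, under the
joint distribution q(u) = ∏ₜ pₜ*(uₜ|u_{<t}), of -log pₜ*(uₜ|u_{<t}). -/
theorem mef_total_conditional_entropy (T : ℕ) (hT : 0 < T) (U : Type*) [Fintype U] [Nonempty U]
    [DecidableEq U] (S : Finset (Fin T → U)) (hS : S.Nonempty) :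
    ∑ t : Fin T, ∑ u : Fin T → U,
      (∏ s : Fin T, mef S u (s : ℕ)) * (-Real.log (mef S u (t : ℕ)))
      = Real.log (S.card : ℝ) :=
  mef_total_conditional_entropy_general T U S
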